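/- arXiv:2206.05112 — 3 statements merged into one kernel-verified Lean document; each statement's English description precedes it below -/
import Mathlib

section
/- For the LOS Z3RO precoder with M antennas and M_s saturated antennas (0 < M_s < M/2), normalized to unit power, the achieved array gain equals M · (ζ^{2/3} - (1-ζ)^{2/3})^2 / (ζ^{1/3} + (1-ζ)^{1/3}) times β, where ζ = M_s/M. That is, with g_m = α for the M - M_s unsaturated antennas and g_m = -α((M-M_s)/M_s)^{1/3} for the M_s saturated antennas and α chosen so that ∑ g_m^2 = 1, one has (∑_m √β g_m)^2 = βM(ζ^{2/3}-(1-ζ)^{2/3})^2/(ζ^{1/3}+(1-ζ)^{1/3}). -/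
/-!
Write `a = ζ^{1/3}` and `b = (1 - ζ)^{1/3}`, so that `M_s = M a³`, `M - M_s = M b³` and the
saturation ratio `((M - M_s)/M_s)^{1/3}` is `b / a`. Then `∑ g_m = α M b (b² - a²)` and the power
constraint reads `α² M b² (a + b) = 1`; eliminating `α²` from `(∑ g_m)²` gives the formula.
-/

open Finset in
theorem Finset.sum_univ_ite_mem {ι R : Type*} [Fintype ι] [DecidableEq ι] [CommRing R]
    (s : Finset ι) (x y : R) :
    ∑ i, (if i ∈ s then x else y) = #s * x + (Fintype.card ι - #s) * y := by
  rw [← sum_add_sum_compl s, sum_ite_of_true (fun _ => id),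
    sum_ite_of_false (fun _ => mem_compl.mp), sum_const, sum_const, card_compl, nsmul_eq_mul,
    nsmul_eq_mul, Nat.cast_sub (card_le_univ s)]

theorem Real.rpow_one_div_three_pow_three {x : ℝ} (hx : 0 ≤ x) :
    (x ^ ((1 : ℝ) / 3)) ^ 3 = x := by
  rw [one_div]
  exact_mod_cast Real.rpow_inv_natCast_pow hx three_ne_zero

theorem Real.rpow_two_div_three_eq_sq {x : ℝ} (hx : 0 ≤ x) :
    x ^ ((2 : ℝ) / 3) = (x ^ ((1 : ℝ) / 3)) ^ 2 := by
  rw [← Real.rpow_natCast, ← Real.rpow_mul hx]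
  norm_num

theorem two_level_gain_sq (N α a b : ℝ) (hab : a + b ≠ 0)
    (hnorm : N * a ^ 3 * (-α * (b / a)) ^ 2 + N * b ^ 3 * α ^ 2 = 1) :
    (N * a ^ 3 * (-α * (b / a)) + N * b ^ 3 * α) ^ 2 = N * (a ^ 2 - b ^ 2) ^ 2 / (a + b) := by
  have hdiv : a ^ 3 * (b / a) = a ^ 2 * b := by
    rcases eq_or_ne a 0 with rfl | ha
    · simp
    · field_simp
  have hdiv_sq : a ^ 3 * (b / a) ^ 2 = a * b ^ 2 := by
    rcases eq_or_ne a 0 with rfl | ha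
    · simp
    · field_simp
  have hpower : N * α ^ 2 * b ^ 2 * (a + b) = 1 := by
    linear_combination hnorm - N * α ^ 2 * hdiv_sq
  have hsum : N * a ^ 3 * (-α * (b / a)) + N * b ^ 3 * α = N * α * b * (b ^ 2 - a ^ 2) := by
    linear_combination -N * α * hdiv
  rw [hsum, eq_div_iff hab]
  linear_combination N * (a ^ 2 - b ^ 2) ^ 2 * hpower

theorem z3ro_gain_sq (N ζ α : ℝ) (hζ0 : 0 ≤ ζ) (hζ1 : ζ ≤ 1)
    (hnorm : N * ζ * (-α * ((1 - ζ) / ζ) ^ ((1 : ℝ) / 3)) ^ 2 + N * (1 - ζ) * α ^ 2 = 1) :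
    (N * ζ * (-α * ((1 - ζ) / ζ) ^ ((1 : ℝ) / 3)) + N * (1 - ζ) * α) ^ 2 =
      N * (ζ ^ ((2 : ℝ) / 3) - (1 - ζ) ^ ((2 : ℝ) / 3)) ^ 2 /
        (ζ ^ ((1 : ℝ) / 3) + (1 - ζ) ^ ((1 : ℝ) / 3)) := by
  have hζ1' : 0 ≤ 1 - ζ := sub_nonneg.2 hζ1
  set a := ζ ^ ((1 : ℝ) / 3)
  set b := (1 - ζ) ^ ((1 : ℝ) / 3)
  have ha3 : a ^ 3 = ζ := Real.rpow_one_div_three_pow_three hζ0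
  have hb3 : b ^ 3 = 1 - ζ := Real.rpow_one_div_three_pow_three hζ1'
  have hratio : ((1 - ζ) / ζ) ^ ((1 : ℝ) / 3) = b / a := Real.div_rpow hζ1' hζ0 _
  have hab : a + b ≠ 0 := fun h =>
    one_ne_zero (by linear_combination (a ^ 2 - a * b + b ^ 2) * h - ha3 - hb3 : (1 : ℝ) = 0)
  have key := two_level_gain_sq N α a b hab (by rwa [ha3, hb3, ← hratio])
  rwa [ha3, hb3, ← hratio, ← Real.rpow_two_div_three_eq_sq hζ0,
    ← Real.rpow_two_div_three_eq_sq hζ1'] at key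

theorem los_z3ro_array_gain_general (M Ms : ℕ) (β α : ℝ) (hβ : 0 < β)
    (𝓜 : Finset (Fin M)) (hcard : 𝓜.card = Ms)
    (hMsM : (Ms : ℝ) < M / 2)
    (g : Fin M → ℝ)
    (hg : ∀ m, g m = if m ∈ 𝓜 then -α * ((M - Ms : ℝ) / Ms) ^ ((1 : ℝ) / 3) else α)
    (hnorm : ∑ m, g m ^ 2 = 1) :
    (∑ m, Real.sqrt β * g m) ^ 2 =
      β * M * (((Ms : ℝ) / M) ^ ((2 : ℝ) / 3) - (1 - (Ms : ℝ) / M) ^ ((2 : ℝ) / 3)) ^ 2 /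
        (((Ms : ℝ) / M) ^ ((1 : ℝ) / 3) + (1 - (Ms : ℝ) / M) ^ ((1 : ℝ) / 3)) := by
  have hM : (0 : ℝ) < M := by linarith [Nat.cast_nonneg (α := ℝ) Ms]
  set ζ := (Ms : ℝ) / M
  have hζ1 : ζ ≤ 1 := div_le_one_of_le₀ (by linarith) hM.le
  have hMs : (Ms : ℝ) = M * ζ := (mul_div_cancel₀ _ hM.ne').symm
  have hMMs : (M : ℝ) - Ms = M * (1 - ζ) := by rw [hMs]; ring
  have hratio : ((M - Ms : ℝ) / Ms) = (1 - ζ) / ζ := by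
    rw [hMMs, hMs, mul_div_mul_left _ _ hM.ne']
  have hsum : ∑ m, g m = M * ζ * (-α * ((1 - ζ) / ζ) ^ ((1 : ℝ) / 3)) + M * (1 - ζ) * α := by
    simp only [hg]
    rw [Finset.sum_univ_ite_mem, hcard, Fintype.card_fin, hratio, hMMs, hMs]
  have hsum_sq : ∑ m, g m ^ 2 =
      M * ζ * (-α * ((1 - ζ) / ζ) ^ ((1 : ℝ) / 3)) ^ 2 + M * (1 - ζ) * α ^ 2 := by
    simp only [hg, apply_ite (· ^ 2)]
    rw [Finset.sum_univ_ite_mem, hcard, Fintype.card_fin, hratio, hMMs, hMs]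
  rw [hsum_sq] at hnorm
  rw [← Finset.mul_sum, mul_pow, Real.sq_sqrt hβ.le, hsum,
    z3ro_gain_sq M ζ α (div_nonneg (Nat.cast_nonneg _) hM.le) hζ1 hnorm]
  ring

theorem los_z3ro_array_gain (M Ms : ℕ) (β α : ℝ) (hβ : 0 < β) (hα : 0 < α)
    (𝓜 : Finset (Fin M)) (hcard : 𝓜.card = Ms) (hMs : 0 < Ms)
    (hMsM : (Ms : ℝ) < M / 2)
    (g : Fin M → ℝ)
    (hg : ∀ m, g m = if m ∈ 𝓜 then -α * ((M - Ms : ℝ) / Ms) ^ ((1 : ℝ) / 3) else α)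
    (hnorm : ∑ m, g m ^ 2 = 1) :
    (∑ m, Real.sqrt β * g m) ^ 2 =
      β * M * (((Ms : ℝ) / M) ^ ((2 : ℝ) / 3) - (1 - (Ms : ℝ) / M) ^ ((2 : ℝ) / 3)) ^ 2 /
        (((Ms : ℝ) / M) ^ ((1 : ℝ) / 3) + (1 - (Ms : ℝ) / M) ^ ((1 : ℝ) / 3)) :=
  los_z3ro_array_gain_general M Ms β α hβ 𝓜 hcard hMsM g hg hnorm
end

section
/- The function G(ζ) = (ζ^{2/3} - (1-ζ)^{2/3})^2 / (ζ^{1/3} + (1-ζ)^{1/3}) satisfies 0 ≤ G(ζ) < 1 for all ζ ∈ (0, 1/2), i.e., the Z3RO precoder never exceeds the MRT array gain and incurs a strict penalty. -/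
theorem z3ro_gain_penalty (ζ : ℝ) (hζ : ζ ∈ Set.Ioo (0 : ℝ) (1 / 2)) :
    0 ≤ (ζ ^ ((2 : ℝ) / 3) - (1 - ζ) ^ ((2 : ℝ) / 3)) ^ 2 /
          (ζ ^ ((1 : ℝ) / 3) + (1 - ζ) ^ ((1 : ℝ) / 3)) ∧
    (ζ ^ ((2 : ℝ) / 3) - (1 - ζ) ^ ((2 : ℝ) / 3)) ^ 2 /
          (ζ ^ ((1 : ℝ) / 3) + (1 - ζ) ^ ((1 : ℝ) / 3)) < 1 := by
  obtain ⟨h0, h1⟩ := hζ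
  have h1' : (0:ℝ) < 1 - ζ := by linarith
  set a := ζ ^ ((1:ℝ)/3) with ha_def
  set b := (1 - ζ) ^ ((1:ℝ)/3) with hb_def
  have ha : 0 < a := Real.rpow_pos_of_pos h0 _
  have hb : 0 < b := Real.rpow_pos_of_pos h1' _
  have cube : ∀ x : ℝ, 0 < x → (x ^ ((1:ℝ)/3)) ^ 3 = x := by
    intro x hx
    rw [← Real.rpow_natCast (x ^ ((1:ℝ)/3)) 3, ← Real.rpow_mul hx.le]
    norm_num
  have sq23 : ∀ x : ℝ, 0 < x → x ^ ((2:ℝ)/3) = (x ^ ((1:ℝ)/3)) ^ 2 := by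
    intro x hx
    rw [← Real.rpow_natCast (x ^ ((1:ℝ)/3)) 2, ← Real.rpow_mul hx.le]
    norm_num
  have ha3 : a ^ 3 = ζ := cube ζ h0
  have hb3 : b ^ 3 = 1 - ζ := cube _ h1'
  have hsum : a ^ 3 + b ^ 3 = 1 := by rw [ha3, hb3]; ring
  rw [sq23 ζ h0, sq23 _ h1']
  have hden : 0 < a + b := by linarith
  constructor
  · exact div_nonneg (sq_nonneg _) hden.le
  · rw [div_lt_one hden]
    nlinarith [mul_pos (mul_pos ha hb) (mul_pos hden hden), sq_nonneg (a + b)]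
end

section
/- For any complex channel h and MRT precoder w_m = α h_m^* with α = 1/√(∑|h_{m'}|^2), the third-order distortion term at the receiver, ∑_m h_m w_m |w_m|^2, equals α^3 ∑_m |h_m|^4, which is real, positive (when h ≠ 0), and in phase with the linear term α ∑_m |h_m|^2; hence the distortion combines coherently with the signal. -/
open ComplexConjugate

lemma sum_norm_pow_pos_of_ne_zero {ι E : Type*} [Fintype ι] [NormedAddCommGroup E]
    {h : ι → E} (hne : h ≠ 0) (n : ℕ) : 0 < ∑ i, ‖h i‖ ^ n := by
  obtain ⟨i, hi⟩ := Function.ne_iff.mp hne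
  exact Finset.sum_pos' (fun j _ => by positivity)
    ⟨i, Finset.mem_univ i, pow_pos (norm_pos_iff.mpr hi) n⟩

lemma Complex.norm_ofReal_mul_conj {α : ℝ} (hα : 0 ≤ α) (z : ℂ) :
    ‖(α : ℂ) * conj z‖ = α * ‖z‖ := by
  rw [norm_mul, Complex.norm_conj, Complex.norm_real, Real.norm_of_nonneg hα]

lemma Complex.mul_ofReal_mul_conj (α : ℝ) (z : ℂ) :
    z * ((α : ℂ) * conj z) = ((α * ‖z‖ ^ 2 : ℝ) : ℂ) := by
  rw [mul_left_comm, Complex.mul_conj, ← Complex.sq_norm]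
  push_cast
  ring

theorem mrt_distortion_coherent (M : ℕ) (h : Fin M → ℂ) (hne : h ≠ 0)
    (α : ℝ) (hα : α = 1 / Real.sqrt (∑ m', ‖h m'‖ ^ 2))
    (w : Fin M → ℂ) (hw : ∀ m, w m = (α : ℂ) * (starRingEnd ℂ) (h m)) :
    (∑ m, h m * w m * (‖w m‖ : ℂ) ^ 2 =
        ((α ^ 3 * ∑ m, ‖h m‖ ^ 4 : ℝ) : ℂ)) ∧
    0 < α ^ 3 * ∑ m, ‖h m‖ ^ 4 ∧
    (∑ m, h m * w m = ((α * ∑ m, ‖h m‖ ^ 2 : ℝ) : ℂ)) ∧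
    0 < α * ∑ m, ‖h m‖ ^ 2 := by
  have hα_pos : 0 < α := by
    rw [hα]
    have := sum_norm_pow_pos_of_ne_zero hne 2
    positivity
  have hhw (m : Fin M) : h m * w m = ((α * ‖h m‖ ^ 2 : ℝ) : ℂ) := by
    rw [hw, Complex.mul_ofReal_mul_conj]
  have hw_norm (m : Fin M) : ‖w m‖ = α * ‖h m‖ := by
    rw [hw, Complex.norm_ofReal_mul_conj hα_pos.le]
  refine ⟨?_, mul_pos (pow_pos hα_pos 3) (sum_norm_pow_pos_of_ne_zero hne 4), ?_,
    mul_pos hα_pos (sum_norm_pow_pos_of_ne_zero hne 2)⟩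
  · simp only [hhw, hw_norm, Finset.mul_sum]
    push_cast
    exact Finset.sum_congr rfl fun m _ => by ring
  · push_cast [hhw, Finset.mul_sum]
    rfl
end
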